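/- Let K̂ = H ∘ 𝒦̂ where 𝒦̂ : ℝ^{p,q} × (Cl(ℝ^{p,q})^{c})² → Cl(ℝ^{p,q})^{c_out × c_in} is O(p,q)-equivariant (𝒦̂(g x, ρ(g) v, ρ(g) w) = ρ(g) 𝒦̂(x, v, w) with ρ(g) acting entrywise) and H is the geometric-product kernel head. Then K̂ satisfies the conditional steerability constraint: K̂(g x, ρ(g) v, ρ(g) w) = ρ(g) ∘ K̂(x, v, w) ∘ ρ(g)⁻¹ for all g ∈ O(p,q). -/

import Mathlib

/-- The quadratic form of signature `(p, q)` on `ℝ^{p+q}`. -/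
noncomputable def Qpq (p q : ℕ) : QuadraticForm ℝ (Fin (p + q) → ℝ) :=
  QuadraticMap.weightedSumSquares ℝ (fun i : Fin (p + q) => if (i : ℕ) < p then (1 : ℝ) else -1)

/-- The kernel head `H`: partial evaluation of the geometric product,
`(H(M) v)ᵢ = Σⱼ Mᵢⱼ · vⱼ`. -/
noncomputable def kernelHead (p q cin cout : ℕ)
    (M : Fin cout → Fin cin → CliffordAlgebra (Qpq p q))
    (v : Fin cin → CliffordAlgebra (Qpq p q)) : Fin cout → CliffordAlgebra (Qpq p q) :=
  fun i => ∑ j, M i j * v j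

section KernelHead

variable {p q cin cout : ℕ} {F : Type*}
  [FunLike F (CliffordAlgebra (Qpq p q)) (CliffordAlgebra (Qpq p q))]

theorem kernelHead_map [RingHomClass F (CliffordAlgebra (Qpq p q)) (CliffordAlgebra (Qpq p q))]
    (f : F) (M : Fin cout → Fin cin → CliffordAlgebra (Qpq p q))
    (v : Fin cin → CliffordAlgebra (Qpq p q)) :
    kernelHead p q cin cout (fun i j => f (M i j)) (fun j => f (v j)) =
      fun i => f (kernelHead p q cin cout M v i) := by
  funext i
  simp only [kernelHead, map_sum, map_mul]

theorem kernelHead_algEquiv_conj (e : CliffordAlgebra (Qpq p q) ≃ₐ[ℝ] CliffordAlgebra (Qpq p q))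
    (M : Fin cout → Fin cin → CliffordAlgebra (Qpq p q)) (u : Fin cin → CliffordAlgebra (Qpq p q)) :
    kernelHead p q cin cout (fun i j => e (M i j)) u =
      fun i => e (kernelHead p q cin cout M (fun j => e.symm (u j)) i) := by
  rw [← kernelHead_map]
  simp only [AlgEquiv.apply_symm_apply]

end KernelHead

/-- if the conditional kernel network `𝒦̂` is `O(p,q)`-equivariant, then the
conditional Clifford-steerable kernel `K̂ = H ∘ 𝒦̂` satisfies the conditional steerability
constraint `K̂(g x, ρ(g) v, ρ(g) w) = ρ(g) ∘ K̂(x, v, w) ∘ ρ(g)⁻¹` for all `g ∈ O(p,q)`. -/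
theorem conditional_clifford_steerable_kernel_equivariant
    (p q c cin cout : ℕ) (g : (Qpq p q).IsometryEquiv (Qpq p q))
    (Knet : (Fin (p + q) → ℝ) → (Fin c → CliffordAlgebra (Qpq p q)) →
      (Fin c → CliffordAlgebra (Qpq p q)) → Fin cout → Fin cin → CliffordAlgebra (Qpq p q))
    (hKnet : ∀ (x : Fin (p + q) → ℝ) (v w : Fin c → CliffordAlgebra (Qpq p q)),
      Knet (g x) (fun i => CliffordAlgebra.equivOfIsometry g (v i))
          (fun i => CliffordAlgebra.equivOfIsometry g (w i))
        = fun i j => CliffordAlgebra.equivOfIsometry g (Knet x v w i j)) :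
    ∀ (x : Fin (p + q) → ℝ) (v w : Fin c → CliffordAlgebra (Qpq p q))
      (u : Fin cin → CliffordAlgebra (Qpq p q)),
      kernelHead p q cin cout
          (Knet (g x) (fun i => CliffordAlgebra.equivOfIsometry g (v i))
            (fun i => CliffordAlgebra.equivOfIsometry g (w i))) u
        = fun i => CliffordAlgebra.equivOfIsometry g
            (kernelHead p q cin cout (Knet x v w)
              (fun j => (CliffordAlgebra.equivOfIsometry g).symm (u j)) i) := by
  intro x v w u
  rw [hKnet]
  exact kernelHead_algEquiv_conj _ _ _
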